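/- The sequence α(n) = (-1;q)_n / 2^n satisfies E_{q,α}(-z) · E_{q,α}(z) = 1 as formal power series; equivalently, Σ_{k=0}^{2p} C_q(2p,k) (-1)^k ((-1;q)_k/2^k)((-1;q)_{2p-k}/2^{2p-k}) = 0 for all p ≥ 1. -/

import Mathlib

/-!
Write `A n` for the coefficient of `zⁿ` in `E(-z) E(z)`, for any sequence with
`α (k + 1) = c (1 + qᵏ) α k`. Splitting `[n+1]_q = [k]_q + qᵏ [n+1-k]_q` in the `k`-th term of
`[n+1]_q A (n+1)` gives two sums that combine termwise, since
`qᵏ (1 + q^(n-k)) - (1 + qᵏ) = qⁿ - 1` no longer depends on `k`; hence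
`[n+1]_q A (n+1) = c (qⁿ - 1) A n`. So `A 1 = 0`, and as `[n]_q ≠ 0` every `A n` with `n ≥ 1`
vanishes. The `q`-binomial sum is `[n]_q! A n`.
-/

open Finset PowerSeries

noncomputable def qInt (q : ℂ) (n : ℕ) : ℂ := ∑ i ∈ Finset.range n, q ^ i

noncomputable def qFact (q : ℂ) (n : ℕ) : ℂ := ∏ k ∈ Finset.range n, qInt q (k + 1)

noncomputable def qBinom (q : ℂ) (n k : ℕ) : ℂ := qFact q n / (qFact q k * qFact q (n - k))

noncomputable def alphaPoch (q : ℂ) (n : ℕ) : ℂ :=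
  (∏ j ∈ Finset.range n, (1 + q ^ j)) / 2 ^ n

noncomputable def Eqa (q : ℂ) (α : ℕ → ℂ) (x : ℂ) : PowerSeries ℂ :=
  PowerSeries.mk fun n => α n * x ^ n / qFact q n

section

variable {q : ℂ}

@[simp]
theorem qInt_zero : qInt q 0 = 0 := sum_range_zero _

theorem qInt_add (a b : ℕ) : qInt q (a + b) = qInt q a + q ^ a * qInt q b := by
  simp only [qInt, sum_range_add, mul_sum, pow_add]

theorem qInt_ne_zero (hroot : ∀ k : ℕ, 1 ≤ k → q ^ k ≠ 1) {m : ℕ} (hm : m ≠ 0) :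
    qInt q m ≠ 0 := by
  have hq : q ≠ 1 := fun h => hroot 1 le_rfl (by simp [h])
  rw [qInt, geom_sum_eq hq]
  exact div_ne_zero (sub_ne_zero.mpr (hroot m (Nat.one_le_iff_ne_zero.mpr hm)))
    (sub_ne_zero.mpr hq)

@[simp]
theorem qFact_zero : qFact q 0 = 1 := prod_range_zero _

theorem qFact_succ (n : ℕ) : qFact q (n + 1) = qFact q n * qInt q (n + 1) :=
  prod_range_succ _ _

theorem qFact_ne_zero (hroot : ∀ k : ℕ, 1 ≤ k → q ^ k ≠ 1) (n : ℕ) : qFact q n ≠ 0 :=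
  prod_ne_zero_iff.mpr fun k _ => qInt_ne_zero hroot k.succ_ne_zero

theorem alphaPoch_succ (n : ℕ) : alphaPoch q (n + 1) = 2⁻¹ * (1 + q ^ n) * alphaPoch q n := by
  rw [alphaPoch, alphaPoch, prod_range_succ, pow_succ]
  field_simp

theorem coeff_Eqa_neg_one_mul_Eqa_one (α : ℕ → ℂ) (n : ℕ) :
    coeff n (Eqa q α (-1) * Eqa q α 1) =
      ∑ k ∈ range (n + 1), (-1) ^ k * α k * α (n - k) / (qFact q k * qFact q (n - k)) := by
  rw [coeff_mul, Nat.sum_antidiagonal_eq_sum_range_succ_mk]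
  refine sum_congr rfl fun k _ => ?_
  simp only [Eqa, coeff_mk, one_pow, mul_one]
  ring

theorem sum_qBinom_eq_qFact_mul_coeff (α : ℕ → ℂ) (n : ℕ) :
    ∑ k ∈ range (n + 1), qBinom q n k * (-1) ^ k * α k * α (n - k) =
      qFact q n * coeff n (Eqa q α (-1) * Eqa q α 1) := by
  rw [coeff_Eqa_neg_one_mul_Eqa_one, mul_sum]
  refine sum_congr rfl fun k _ => ?_
  rw [qBinom]
  ring

theorem qInt_succ_mul_coeff_succ (hroot : ∀ k : ℕ, 1 ≤ k → q ^ k ≠ 1) {α : ℕ → ℂ} {c : ℂ}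
    (hα : ∀ k, α (k + 1) = c * (1 + q ^ k) * α k) (n : ℕ) :
    qInt q (n + 1) * coeff (n + 1) (Eqa q α (-1) * Eqa q α 1) =
      c * (q ^ n - 1) * coeff n (Eqa q α (-1) * Eqa q α 1) := by
  set T : ℕ → ℕ → ℂ := fun m k => (-1) ^ k * α k * α (m - k) / (qFact q k * qFact q (m - k))
  have split : ∀ k ∈ range (n + 2), qInt q (n + 1) * T (n + 1) k =
      qInt q k * T (n + 1) k + q ^ k * qInt q (n + 1 - k) * T (n + 1) k := by
    intro k hk
    rw [← add_mul, ← qInt_add, Nat.add_sub_cancel' (Nat.lt_succ_iff.mp (mem_range.mp hk))]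
  rw [coeff_Eqa_neg_one_mul_Eqa_one, coeff_Eqa_neg_one_mul_Eqa_one, mul_sum, mul_sum,
    sum_congr rfl split, sum_add_distrib, sum_range_succ', sum_range_succ _ (n + 1)]
  simp only [qInt_zero, zero_mul, add_zero, Nat.sub_self, mul_zero]
  rw [← sum_add_distrib]
  refine sum_congr rfl fun k hk => ?_
  have hk : k ≤ n := Nat.lt_succ_iff.mp (mem_range.mp hk)
  obtain ⟨m, rfl⟩ := Nat.exists_eq_add_of_le hk
  simp only [T, show k + m + 1 - (k + 1) = m by omega, show k + m + 1 - k = m + 1 by omega,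
    show k + m - k = m by omega, qFact_succ, hα, pow_add, pow_succ]
  have := qFact_ne_zero hroot k
  have := qFact_ne_zero hroot m
  have := qInt_ne_zero hroot k.succ_ne_zero
  have := qInt_ne_zero hroot m.succ_ne_zero
  field_simp
  ring

theorem coeff_Eqa_neg_one_mul_Eqa_one_eq_zero (hroot : ∀ k : ℕ, 1 ≤ k → q ^ k ≠ 1)
    {α : ℕ → ℂ} {c : ℂ} (hα : ∀ k, α (k + 1) = c * (1 + q ^ k) * α k) {n : ℕ} (hn : n ≠ 0) :
    coeff n (Eqa q α (-1) * Eqa q α 1) = 0 := by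
  induction n with
  | zero => exact absurd rfl hn
  | succ n ih =>
    have key := qInt_succ_mul_coeff_succ hroot hα n
    rcases eq_or_ne n 0 with rfl | hn'
    · simpa [qInt_ne_zero hroot one_ne_zero] using key
    · simpa [ih hn', qInt_ne_zero hroot n.succ_ne_zero] using key

theorem Eqa_neg_one_mul_Eqa_one (hroot : ∀ k : ℕ, 1 ≤ k → q ^ k ≠ 1)
    {α : ℕ → ℂ} {c : ℂ} (hα : ∀ k, α (k + 1) = c * (1 + q ^ k) * α k) :
    Eqa q α (-1) * Eqa q α 1 = C (α 0 ^ 2) := by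
  ext n
  rcases eq_or_ne n 0 with rfl | hn
  · simp [coeff_Eqa_neg_one_mul_Eqa_one, sq]
  · rw [coeff_Eqa_neg_one_mul_Eqa_one_eq_zero hroot hα hn, coeff_C, if_neg hn]

end

theorem stmt9_general (q : ℂ) (hroot : ∀ k : ℕ, 1 ≤ k → q ^ k ≠ 1) :
    Eqa q (alphaPoch q) (-1) * Eqa q (alphaPoch q) 1 = 1 ∧
      ∀ p : ℕ, 1 ≤ p →
        ∑ k ∈ Finset.range (2 * p + 1),
          qBinom q (2 * p) k * (-1) ^ k * alphaPoch q k * alphaPoch q (2 * p - k) = 0 := by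
  refine ⟨by simp [Eqa_neg_one_mul_Eqa_one hroot alphaPoch_succ, alphaPoch], fun p hp => ?_⟩
  rw [sum_qBinom_eq_qFact_mul_coeff,
    coeff_Eqa_neg_one_mul_Eqa_one_eq_zero hroot alphaPoch_succ (by omega), mul_zero]

/-- α(n) = (-1;q)_n/2^n satisfies E_{q,α}(-z)E_{q,α}(z) = 1, equivalently the
alternating q-binomial convolution vanishes in every even positive degree. -/
theorem stmt9 (q : ℂ) (hq0 : 0 < ‖q‖) (hq1 : ‖q‖ < 1)
    (hroot : ∀ k : ℕ, 1 ≤ k → q ^ k ≠ 1) :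
    Eqa q (alphaPoch q) (-1) * Eqa q (alphaPoch q) 1 = 1 ∧
      ∀ p : ℕ, 1 ≤ p →
        ∑ k ∈ Finset.range (2 * p + 1),
          qBinom q (2 * p) k * (-1) ^ k * alphaPoch q k * alphaPoch q (2 * p - k) = 0 :=
  stmt9_general q hroot
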